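/- arXiv:2504.12866 — 2 statements merged into one kernel-verified Lean document; each statement's English description precedes it below -/
import Mathlib

section
/- For every r with 0 ≤ r ≤ 1, ∫₀¹ (arcsin(r·t))²/√(1−t²) dt = (π/4)·Li₂(r²), where Li₂(x) := ∑_{k≥1} x^k/k². -/
open Real intervalIntegral Filter MeasureTheory

/-- Euler's dilogarithm `Li₂(x) = ∑_{k ≥ 1} x^k / k²`. -/
noncomputable def dilog (x : ℝ) : ℝ :=
  ∑' k : ℕ, x ^ (k + 1) / ((k : ℝ) + 1) ^ 2



noncomputable def dd (n : ℕ) : ℝ :=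
  4 ^ n * (Nat.factorial n : ℝ) ^ 2 / (Nat.factorial (2 * n + 1) : ℝ)

lemma dd_pos (n : ℕ) : 0 < dd n := by
  apply div_pos (by positivity)
  exact_mod_cast Nat.factorial_pos _

lemma dd_succ (n : ℕ) : dd (n + 1) = dd n * (2 * n + 2) / (2 * n + 3) := by
  have h1 : 2 * (n + 1) + 1 = (2 * n + 1) + 1 + 1 := by ring
  have h2 : Nat.factorial ((2*n+1)+1+1) = ((2*n+1)+1+1) * (((2*n+1)+1) * Nat.factorial (2*n+1)) := by
    rw [Nat.factorial_succ, Nat.factorial_succ]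
  have hf : (Nat.factorial (2*n+1) : ℝ) ≠ 0 := by exact_mod_cast (Nat.factorial_pos _).ne'
  unfold dd
  rw [h1, h2, Nat.factorial_succ]
  push_cast
  field_simp
  ring

lemma dd_le_one (n : ℕ) : dd n ≤ 1 := by
  induction n with
  | zero => simp [dd]
  | succ n ih =>
      rw [dd_succ]
      have h3 : (0:ℝ) < 2 * n + 3 := by positivity
      rw [div_le_one h3]
      nlinarith [dd_pos n]

lemma dd_zero : dd 0 = 1 := by simp [dd]


-- summability helper
lemma summable_aux {b : ℝ} (hb0 : 0 ≤ b) (hb : b < 1) :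
    Summable (fun n : ℕ => (2 * (n : ℝ) + 2) * b ^ (2 * n)) := by
  have hb2 : ‖b ^ 2‖ < 1 := by
    rw [Real.norm_eq_abs, abs_of_nonneg (by positivity)]
    nlinarith
  have h1 : Summable (fun n : ℕ => (n : ℝ) * (b ^ 2) ^ n) := by
    simpa using summable_pow_mul_geometric_of_norm_lt_one 1 hb2
  have h2 : Summable (fun n : ℕ => (b ^ 2) ^ n) :=
    summable_geometric_of_norm_lt_one hb2
  have := (h1.mul_left 2).add (h2.mul_left 2)
  apply this.congr
  intro n
  rw [← pow_mul]
  ring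



noncomputable def gg (x : ℝ) : ℝ := ∑' n : ℕ, dd n * x ^ (2 * n + 1)
noncomputable def gder (x : ℝ) : ℝ := ∑' n : ℕ, dd n * ((2 * (n:ℝ) + 1) * x ^ (2 * n))

lemma term_bound {b x : ℝ} (hx : |x| ≤ b) (n : ℕ) (m : ℕ) :
    |x ^ m| ≤ b ^ m := by
  rw [abs_pow]
  exact pow_le_pow_left₀ (abs_nonneg x) hx m

lemma summable_gder {x : ℝ} (hx : |x| < 1) :
    Summable (fun n : ℕ => dd n * ((2 * (n:ℝ) + 1) * x ^ (2 * n))) := by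
  apply Summable.of_norm
  apply Summable.of_nonneg_of_le (fun n => norm_nonneg _) _ (summable_aux (abs_nonneg x) hx)
  intro n
  rw [norm_mul, norm_mul, Real.norm_eq_abs, Real.norm_eq_abs, Real.norm_eq_abs,
    abs_of_nonneg (dd_pos n).le, abs_of_nonneg (by positivity : (0:ℝ) ≤ 2*(n:ℝ)+1), abs_pow]
  calc dd n * ((2*(n:ℝ)+1) * |x| ^ (2*n)) ≤ 1 * ((2*(n:ℝ)+2) * |x| ^ (2*n)) := by
        apply mul_le_mul (dd_le_one n) _ (by positivity) zero_le_one
        apply mul_le_mul_of_nonneg_right (by linarith) (by positivity)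
    _ = (2*(n:ℝ)+2) * |x| ^ (2*n) := one_mul _

lemma summable_gg {x : ℝ} (hx : |x| < 1) :
    Summable (fun n : ℕ => dd n * x ^ (2 * n + 1)) := by
  apply Summable.of_norm
  apply Summable.of_nonneg_of_le (fun n => norm_nonneg _) _ (summable_aux (abs_nonneg x) hx)
  intro n
  rw [norm_mul, Real.norm_eq_abs, Real.norm_eq_abs, abs_of_nonneg (dd_pos n).le, abs_pow, pow_succ]
  have h1 : |x| ^ (2*n) * |x| ≤ (2*(n:ℝ)+2) * |x| ^ (2*n) := by
    have : |x| ^ (2*n) * |x| ≤ |x| ^ (2*n) * 1 :=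
      mul_le_mul_of_nonneg_left hx.le (by positivity)
    nlinarith [pow_nonneg (abs_nonneg x) (2*n)]
  calc dd n * (|x| ^ (2*n) * |x|) ≤ 1 * (|x| ^ (2*n) * |x|) :=
        mul_le_mul_of_nonneg_right (dd_le_one n) (by positivity)
    _ = |x| ^ (2*n) * |x| := one_mul _
    _ ≤ (2*(n:ℝ)+2) * |x| ^ (2*n) := h1

lemma hasDerivAt_gg {x : ℝ} (hx : |x| < 1) : HasDerivAt gg (gder x) x := by
  set b : ℝ := (|x| + 1) / 2 with hb
  have hxb : |x| < b := by rw [hb]; linarith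
  have hb0 : 0 ≤ b := le_trans (abs_nonneg x) hxb.le
  have hb1 : b < 1 := by rw [hb]; linarith
  have hmem : ∀ y ∈ Metric.ball (0:ℝ) b, |y| < b := by
    intro y hy; simpa [Real.dist_eq] using hy
  refine hasDerivAt_of_tendstoUniformlyOn (s := Metric.ball (0:ℝ) b) Metric.isOpen_ball
    (f := fun N (y : ℝ) => ∑ n ∈ Finset.range N, dd n * y ^ (2 * n + 1))
    (f' := fun N (y : ℝ) => ∑ n ∈ Finset.range N, dd n * ((2 * (n:ℝ) + 1) * y ^ (2 * n)))
    (g := gg) (g' := gder) (l := atTop) ?_ ?_ ?_ ?_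
  · -- uniform convergence of derivatives
    apply tendstoUniformlyOn_tsum_nat (u := fun n => (2*(n:ℝ)+2) * b ^ (2*n))
      (summable_aux hb0 hb1)
    intro n y hy
    have hyb := (hmem y hy).le
    rw [Real.norm_eq_abs, abs_mul, abs_mul, abs_of_nonneg (dd_pos n).le,
      abs_of_nonneg (by positivity : (0:ℝ) ≤ 2*(n:ℝ)+1), abs_pow]
    calc dd n * ((2*(n:ℝ)+1) * |y| ^ (2*n)) ≤ 1 * ((2*(n:ℝ)+2) * b ^ (2*n)) := by
          apply mul_le_mul (dd_le_one n) _ (by positivity) zero_le_one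
          apply mul_le_mul (by linarith) (pow_le_pow_left₀ (abs_nonneg y) hyb _) (by positivity) (by positivity)
      _ = (2*(n:ℝ)+2) * b ^ (2*n) := one_mul _
  · -- each partial sum has the termwise derivative
    filter_upwards with N y _
    apply HasDerivAt.fun_sum
    intro n _
    have h := (hasDerivAt_pow (2*n+1) y).const_mul (dd n)
    rw [Nat.add_sub_cancel] at h
    refine h.congr_deriv (Eq.symm ?_)
    push_cast
    ring
  · -- pointwise convergence
    intro y hy
    exact (summable_gg (lt_trans (hmem y hy) hb1)).hasSum.tendsto_sum_nat
  · exact Metric.mem_ball.mpr (by simpa [Real.dist_eq] using hxb)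


-- the ODE identity
lemma ode_identity {x : ℝ} (hx : |x| < 1) : (1 - x ^ 2) * gder x - x * gg x = 1 := by
  have h1 : HasSum (fun n : ℕ => dd n * ((2 * (n:ℝ) + 1) * x ^ (2 * n))) (gder x) :=
    (summable_gder hx).hasSum
  have h2 : HasSum (fun n : ℕ => dd n * x ^ (2 * n + 1)) (gg x) := (summable_gg hx).hasSum
  -- x² * gder + x * gg  has terms  dd n * (2n+2) * x^(2n+2) = dd (n+1) * (2n+3) * x^(2(n+1))
  have h3 : HasSum (fun n : ℕ => dd n * ((2 * (n:ℝ) + 1) * x ^ (2 * n)) * x ^ 2 +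
      dd n * x ^ (2 * n + 1) * x) (gder x * x ^ 2 + gg x * x) :=
    (h1.mul_right _).add (h2.mul_right _)
  have h4 : (fun n : ℕ => dd n * ((2 * (n:ℝ) + 1) * x ^ (2 * n)) * x ^ 2 +
      dd n * x ^ (2 * n + 1) * x) =
      fun n : ℕ => dd (n+1) * ((2 * ((n:ℝ)+1) + 1) * x ^ (2 * (n+1))) := by
    funext n
    have h5 : (2 * (n:ℝ) + 3) ≠ 0 := by positivity
    rw [dd_succ]
    push_cast
    field_simp
    ring
  rw [h4] at h3
  have h6 : HasSum (fun n : ℕ => dd (n+1) * ((2 * ((n+1):ℕ) + 1) * x ^ (2 * (n+1)))) 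
      (gder x - ∑ i ∈ Finset.range 1, dd i * ((2 * (i:ℝ) + 1) * x ^ (2 * i))) := by
    exact (hasSum_nat_add_iff' 1).mpr (by simpa using h1)
  have h7 : (fun n : ℕ => dd (n+1) * ((2 * (((n+1):ℕ)):ℝ) + 1) * x ^ (2 * (n+1))) =
      (fun n : ℕ => dd (n+1) * ((2 * ((n:ℝ)+1) + 1) * x ^ (2 * (n+1)))) := by
    funext n; push_cast; ring
  have h6' : HasSum (fun n : ℕ => dd (n+1) * ((2 * ((n:ℝ)+1) + 1) * x ^ (2 * (n+1))))
      (gder x - 1) := by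
    have e1 : (∑ i ∈ Finset.range 1, dd i * ((2 * (i:ℝ) + 1) * x ^ (2 * i))) = 1 := by
      simp [dd_zero]
    rw [e1] at h6
    apply h6.congr_fun
    intro n; push_cast; ring
  have h8 : gder x * x ^ 2 + gg x * x = gder x - 1 := h3.unique h6'
  nlinarith [h8]

lemma hasDerivAt_sqrt_one_sub_sq {t : ℝ} (ht : |t| < 1) :
    HasDerivAt (fun y : ℝ => Real.sqrt (1 - y ^ 2)) (-t / Real.sqrt (1 - t ^ 2)) t := by
  have h0 : (0:ℝ) < 1 - t ^ 2 := by nlinarith [abs_nonneg t, sq_abs t, abs_lt.1 ht]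
  have hinner : HasDerivAt (fun y : ℝ => 1 - y ^ 2) (-(2 * t)) t := by
    simpa using ((hasDerivAt_pow 2 t).const_sub 1)
  have h := (Real.hasDerivAt_sqrt h0.ne').comp t hinner
  refine h.congr_deriv (Eq.symm ?_)
  rw [Real.sqrt_eq_rpow]
  field_simp

lemma arcsin_eq_gg {x : ℝ} (hx0 : 0 ≤ x) (hx : x < 1) :
    Real.arcsin x = gg x * Real.sqrt (1 - x ^ 2) := by
  set φ : ℝ → ℝ := fun t => Real.arcsin t - gg t * Real.sqrt (1 - t ^ 2) with hφ
  have key : ∀ t ∈ Set.uIcc 0 x, HasDerivAt φ 0 t := by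
    intro t ht
    rw [Set.uIcc_of_le hx0] at ht
    have ht1 : |t| < 1 := by
      rw [abs_lt]; constructor <;> [linarith [ht.1]; linarith [ht.2]]
    have h0 : (0:ℝ) < 1 - t ^ 2 := by nlinarith [abs_lt.1 ht1]
    have hsq : Real.sqrt (1 - t ^ 2) ≠ 0 := by positivity
    have hsq2 : Real.sqrt (1 - t ^ 2) ^ 2 = 1 - t ^ 2 := Real.sq_sqrt h0.le
    have ha : HasDerivAt Real.arcsin (1 / Real.sqrt (1 - t ^ 2)) t :=
      Real.hasDerivAt_arcsin (by intro h; rw [h] at ht1; norm_num at ht1)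
        (by intro h; rw [h] at ht1; norm_num at ht1)
    have hb : HasDerivAt (fun y => gg y * Real.sqrt (1 - y ^ 2))
        (gder t * Real.sqrt (1 - t ^ 2) + gg t * (-t / Real.sqrt (1 - t ^ 2))) t :=
      (hasDerivAt_gg ht1).mul (hasDerivAt_sqrt_one_sub_sq ht1)
    have h := ha.sub hb
    refine h.congr_deriv (Eq.symm ?_)
    have hode := ode_identity ht1
    have hss : Real.sqrt (1-t^2) * Real.sqrt (1-t^2) = 1 - t^2 := Real.mul_self_sqrt h0.le
    field_simp
    linear_combination gder t * hss + hode
  have h2 := intervalIntegral.integral_eq_sub_of_hasDerivAt key _root_.intervalIntegrable_const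
  simp only [intervalIntegral.integral_zero] at h2
  have hgg0 : gg 0 = 0 := by
    rw [gg]
    convert tsum_zero with n
    simp
  have hφ0 : φ 0 = 0 := by simp [hφ, hgg0]
  have hφx : φ x = 0 := by rw [hφ0] at h2; linarith [h2]
  have : Real.arcsin x - gg x * Real.sqrt (1 - x ^ 2) = 0 := hφx
  linarith [this]

noncomputable def SS (x : ℝ) : ℝ := ∑' n : ℕ, dd n / ((n:ℝ) + 1) * x ^ (2 * n + 2)

lemma summable_SS {x : ℝ} (hx : |x| < 1) :
    Summable (fun n : ℕ => dd n / ((n:ℝ) + 1) * x ^ (2 * n + 2)) := by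
  apply Summable.of_norm
  apply Summable.of_nonneg_of_le (fun n => norm_nonneg _) _ (summable_aux (abs_nonneg x) hx)
  intro n
  have hd : 0 < dd n := dd_pos n
  have hn1 : (0:ℝ) < (n:ℝ) + 1 := by positivity
  rw [Real.norm_eq_abs, abs_mul, abs_pow, abs_of_nonneg (by positivity : (0:ℝ) ≤ dd n / ((n:ℝ)+1))]
  have h1 : dd n / ((n:ℝ)+1) ≤ 1 := by
    rw [div_le_one hn1]
    calc dd n ≤ 1 := dd_le_one n
      _ ≤ (n:ℝ) + 1 := by linarith [Nat.cast_nonneg (α := ℝ) n]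
  have h2 : |x| ^ (2*n+2) ≤ |x| ^ (2*n) := by
    apply pow_le_pow_of_le_one (abs_nonneg x) hx.le
    omega
  calc dd n / ((n:ℝ)+1) * |x| ^ (2*n+2) ≤ 1 * |x| ^ (2*n) := by
        apply mul_le_mul h1 h2 (by positivity) zero_le_one
    _ ≤ (2*(n:ℝ)+2) * |x| ^ (2*n) := by
        apply mul_le_mul_of_nonneg_right _ (by positivity)
        linarith [Nat.cast_nonneg (α := ℝ) n]

lemma hasDerivAt_SS {x : ℝ} (hx : |x| < 1) : HasDerivAt SS (2 * gg x) x := by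
  set b : ℝ := (|x| + 1) / 2 with hb
  have hxb : |x| < b := by rw [hb]; linarith
  have hb0 : 0 ≤ b := le_trans (abs_nonneg x) hxb.le
  have hb1 : b < 1 := by rw [hb]; linarith
  have hmem : ∀ y ∈ Metric.ball (0:ℝ) b, |y| < b := by
    intro y hy; simpa [Real.dist_eq] using hy
  have key : HasDerivAt SS (∑' n : ℕ, 2 * (dd n * x ^ (2 * n + 1))) x := by
    refine hasDerivAt_of_tendstoUniformlyOn (s := Metric.ball (0:ℝ) b) Metric.isOpen_ball
      (f := fun N (y : ℝ) => ∑ n ∈ Finset.range N, dd n / ((n:ℝ)+1) * y ^ (2 * n + 2))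
      (f' := fun N (y : ℝ) => ∑ n ∈ Finset.range N, 2 * (dd n * y ^ (2 * n + 1)))
      (g := SS) (g' := fun y => ∑' n : ℕ, 2 * (dd n * y ^ (2 * n + 1))) (l := atTop) ?_ ?_ ?_ ?_
    · apply tendstoUniformlyOn_tsum_nat (u := fun n => 2 * ((2*(n:ℝ)+2) * b ^ (2*n)))
        ((summable_aux hb0 hb1).mul_left 2)
      intro n y hy
      have hyb := (hmem y hy).le
      have hby : |y| ^ (2*n+1) ≤ b ^ (2*n) := by
        calc |y| ^ (2*n+1) ≤ |y| ^ (2*n) := by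
              apply pow_le_pow_of_le_one (abs_nonneg y) (le_of_lt (lt_of_lt_of_le (hmem y hy) hb1.le))
              omega
          _ ≤ b ^ (2*n) := pow_le_pow_left₀ (abs_nonneg y) hyb _
      rw [Real.norm_eq_abs, abs_mul, abs_mul, abs_of_nonneg (dd_pos n).le, abs_pow]
      rw [abs_of_nonneg (by norm_num : (0:ℝ) ≤ 2)]
      calc 2 * (dd n * |y| ^ (2*n+1)) ≤ 2 * (1 * b ^ (2*n)) := by
            apply mul_le_mul_of_nonneg_left _ (by norm_num)
            exact mul_le_mul (dd_le_one n) hby (by positivity) zero_le_one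
        _ = 2 * b ^ (2*n) := by ring
        _ ≤ 2 * ((2*(n:ℝ)+2) * b ^ (2*n)) := by
            have : (1:ℝ) ≤ 2*(n:ℝ)+2 := by linarith [Nat.cast_nonneg (α := ℝ) n]
            nlinarith [pow_nonneg hb0 (2*n)]
    · filter_upwards with N y _
      apply HasDerivAt.fun_sum
      intro n _
      have h := (hasDerivAt_pow (2*n+2) y).const_mul (dd n / ((n:ℝ)+1))
      rw [show 2*n+2-1 = 2*n+1 from by omega] at h
      refine h.congr_deriv (Eq.symm ?_)
      have hn1 : ((n:ℝ) + 1) ≠ 0 := by positivity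
      push_cast
      rw [div_mul_eq_mul_div, eq_div_iff hn1]
      ring
    · intro y hy
      exact (summable_SS (lt_trans (hmem y hy) hb1)).hasSum.tendsto_sum_nat
    · exact Metric.mem_ball.mpr (by simpa [Real.dist_eq] using hxb)
  rwa [tsum_mul_left] at key

lemma arcsin_sq_eq_SS {x : ℝ} (hx0 : 0 ≤ x) (hx : x < 1) :
    Real.arcsin x ^ 2 = SS x := by
  set ψ : ℝ → ℝ := fun t => Real.arcsin t ^ 2 - SS t with hψ
  have key : ∀ t ∈ Set.uIcc 0 x, HasDerivAt ψ 0 t := by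
    intro t ht
    rw [Set.uIcc_of_le hx0] at ht
    have ht1 : |t| < 1 := by
      rw [abs_lt]; constructor <;> [linarith [ht.1]; linarith [ht.2]]
    have h0 : (0:ℝ) < 1 - t ^ 2 := by nlinarith [abs_lt.1 ht1]
    have hsq : Real.sqrt (1 - t ^ 2) ≠ 0 := by positivity
    have ha : HasDerivAt Real.arcsin (1 / Real.sqrt (1 - t ^ 2)) t :=
      Real.hasDerivAt_arcsin (by intro h; rw [h] at ht1; norm_num at ht1)
        (by intro h; rw [h] at ht1; norm_num at ht1)
    have ha2 : HasDerivAt (fun y => Real.arcsin y ^ 2)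
        (2 * Real.arcsin t ^ 1 * (1 / Real.sqrt (1 - t ^ 2))) t := by
      simpa using ha.fun_pow 2
    have h := ha2.sub (hasDerivAt_SS ht1)
    refine h.congr_deriv (Eq.symm ?_)
    rw [arcsin_eq_gg ht.1 (lt_of_le_of_lt ht.2 hx)]
    field_simp
    ring
  have h2 := intervalIntegral.integral_eq_sub_of_hasDerivAt key _root_.intervalIntegrable_const
  simp only [intervalIntegral.integral_zero] at h2
  have hSS0 : SS 0 = 0 := by
    rw [SS]
    convert tsum_zero with n
    simp
  have hψ0 : ψ 0 = 0 := by simp [hψ, hSS0]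
  have hψx : ψ x = 0 := by rw [hψ0] at h2; linarith [h2]
  have : Real.arcsin x ^ 2 - SS x = 0 := hψx
  linarith [this]

-- integrability of t^k / sqrt(1-t^2) on [0,1]
lemma II (k : ℕ) :
    IntervalIntegrable (fun t : ℝ => t ^ k / Real.sqrt (1 - t ^ 2)) volume 0 1 := by
  have hbound : IntervalIntegrable (fun t : ℝ => (1 - t) ^ (-(1/2) : ℝ)) volume 0 1 := by
    have h := (intervalIntegral.intervalIntegrable_rpow' (a := 0) (b := 1)
      (r := -(1/2)) (by norm_num)).comp_sub_left 1
    simpa using h.symm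
  apply hbound.mono_fun
  · apply Measurable.aestronglyMeasurable
    apply Measurable.div (measurable_id.pow_const k)
    exact (measurable_const.sub (measurable_id.pow_const 2)).sqrt
  · filter_upwards [MeasureTheory.ae_restrict_mem measurableSet_uIoc] with t ht
    rw [Set.uIoc_of_le (by norm_num : (0:ℝ) ≤ 1)] at ht
    obtain ⟨ht0, ht1⟩ := ht
    rw [Real.norm_eq_abs, Real.norm_eq_abs]
    rcases eq_or_lt_of_le ht1 with h1 | h1
    · rw [h1]
      norm_num [Real.zero_rpow]
    · have h2 : (0:ℝ) < 1 - t := by linarith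
      have h3 : (0:ℝ) < 1 - t ^ 2 := by nlinarith
      have h4 : Real.sqrt (1 - t) ≤ Real.sqrt (1 - t ^ 2) := by
        apply Real.sqrt_le_sqrt; nlinarith
      have h5 : (0:ℝ) < Real.sqrt (1 - t) := Real.sqrt_pos.mpr h2
      have h6 : (0:ℝ) < Real.sqrt (1 - t ^ 2) := Real.sqrt_pos.mpr h3
      rw [abs_of_nonneg (by positivity), abs_of_nonneg (by positivity : (0:ℝ) ≤ (1-t) ^ (-(1/2):ℝ))]
      rw [Real.rpow_neg h2.le, ← Real.sqrt_eq_rpow]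
      rw [div_le_iff₀ h6]
      calc t ^ k ≤ 1 := pow_le_one₀ ht0.le ht1
        _ ≤ (Real.sqrt (1-t))⁻¹ * Real.sqrt (1 - t^2) := by
            rw [le_inv_mul_iff₀ h5, mul_one]
            exact h4

noncomputable def II0 (k : ℕ) : ℝ := ∫ t in (0:ℝ)..1, t ^ k / Real.sqrt (1 - t ^ 2)

lemma II0_zero : II0 0 = π / 2 := by
  rw [II0]
  have key : (∫ t in (0:ℝ)..1, t ^ 0 / Real.sqrt (1 - t ^ 2)) =
      Real.arcsin 1 - Real.arcsin 0 := by
    apply intervalIntegral.integral_eq_sub_of_hasDerivAt_of_le zero_le_one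
      Real.continuous_arcsin.continuousOn
    · intro t ht
      have ht1 : t ≠ 1 := ne_of_lt ht.2
      have ht1' : t ≠ -1 := by intro h; rw [h] at ht; norm_num at ht
      have := Real.hasDerivAt_arcsin ht1' ht1
      simpa using this
    · exact (II 0)
  rw [key]; simp [Real.arcsin_one]

lemma II0_rec (k : ℕ) : ((k:ℝ) + 2) * II0 (k + 2) = ((k:ℝ) + 1) * II0 k := by
  set u : ℝ → ℝ := fun t => -(t ^ (k+1) * Real.sqrt (1 - t ^ 2)) with hu
  set v : ℝ → ℝ := fun t =>
    ((k:ℝ)+2) * (t ^ (k+2) / Real.sqrt (1 - t ^ 2)) - ((k:ℝ)+1) * (t ^ k / Real.sqrt (1 - t ^ 2)) with hv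
  have husub : Continuous (fun t : ℝ => Real.sqrt (1 - t ^ 2)) :=
    (continuous_const.sub (continuous_pow 2)).sqrt
  have hcont : ContinuousOn u (Set.Icc 0 1) :=
    (((continuous_pow (k+1)).mul husub).neg).continuousOn
  have hderiv : ∀ t ∈ Set.Ioo (0:ℝ) 1, HasDerivAt u (v t) t := by
    intro t ht
    have h3 : (0:ℝ) < 1 - t ^ 2 := by nlinarith [ht.1, ht.2]
    have hsqrt_pos : (0:ℝ) < Real.sqrt (1 - t ^ 2) := Real.sqrt_pos.mpr h3
    have hss : Real.sqrt (1-t^2) * Real.sqrt (1-t^2) = 1 - t^2 := Real.mul_self_sqrt h3.le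
    have hinner : HasDerivAt (fun y : ℝ => 1 - y ^ 2) (-(2 * t)) t := by
      simpa using ((hasDerivAt_pow 2 t).const_sub 1)
    have hs := (Real.hasDerivAt_sqrt h3.ne').comp t hinner
    have hp := hasDerivAt_pow (k+1) t
    have h := ((hp.mul hs).neg)
    refine h.congr_deriv (Eq.symm ?_)
    simp only [Function.comp_apply, Nat.add_sub_cancel]
    push_cast
    rw [hv]
    field_simp
    linear_combination ((k:ℝ)+1) * t^k * hss
  have hint : IntervalIntegrable v volume 0 1 :=
    ((II (k+2)).const_mul _).sub ((II k).const_mul _)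
  have key := intervalIntegral.integral_eq_sub_of_hasDerivAt_of_le zero_le_one hcont hderiv hint
  have hu1 : u 1 = 0 := by simp [hu]
  have hu0 : u 0 = 0 := by simp [hu]
  rw [hu1, hu0, sub_zero] at key
  have hsplit : ∫ t in (0:ℝ)..1, v t =
      ((k:ℝ)+2) * II0 (k+2) - ((k:ℝ)+1) * II0 k := by
    rw [hv, II0, II0]
    rw [intervalIntegral.integral_sub (((II (k+2)).const_mul _)) (((II k).const_mul _))]
    rw [intervalIntegral.integral_const_mul, intervalIntegral.integral_const_mul]
  rw [hsplit] at key
  linarith [key]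


lemma dd_II0 (n : ℕ) : dd n * II0 (2 * n) = π / (2 * (2 * (n:ℝ) + 1)) := by
  induction n with
  | zero => norm_num [dd_zero, II0_zero]
  | succ n ih =>
      have hrec := II0_rec (2 * n)
      have h1 : 2 * (n + 1) = 2 * n + 2 := by ring
      have h2 : (0:ℝ) < 2 * (n:ℝ) + 2 := by positivity
      have h3 : (0:ℝ) < 2 * (n:ℝ) + 3 := by positivity
      have h4 : (0:ℝ) < 2 * (n:ℝ) + 1 := by positivity
      rw [h1, dd_succ]
      have hII : II0 (2 * n + 2) = (2 * (n:ℝ) + 1) / (2 * (n:ℝ) + 2) * II0 (2 * n) := by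
        have : ((2*n:ℕ):ℝ) + 2 = 2 * (n:ℝ) + 2 := by push_cast; ring
        field_simp at hrec ⊢
        push_cast at hrec
        linarith [hrec]
      rw [hII]
      push_cast
      field_simp
      have := ih
      field_simp at this
      linear_combination (2*(n:ℝ)+3) * this



lemma term_value (n : ℕ) :
    dd n / ((n:ℝ) + 1) * II0 (2 * n + 2) = π / (4 * ((n:ℝ) + 1) ^ 2) := by
  have h1 := dd_II0 (n + 1)
  rw [dd_succ] at h1
  have e1 : 2 * (n + 1) = 2 * n + 2 := by ring
  rw [e1] at h1
  push_cast at h1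
  have h2 : (0:ℝ) < 2 * (n:ℝ) + 3 := by positivity
  have h3 : (0:ℝ) < (n:ℝ) + 1 := by positivity
  field_simp at h1
  have h4 : dd n * II0 (2*n+2) * (2*(2*(n:ℝ)+2)) * (2*(n:ℝ)+3) = π * (2*(n:ℝ)+3) := by
    linear_combination h1
  have h5 := mul_right_cancel₀ h2.ne' h4
  rw [div_mul_eq_mul_div, div_eq_div_iff h3.ne' (by positivity : (4*((n:ℝ)+1)^2) ≠ 0)]
  linear_combination ((n:ℝ)+1) * h5

lemma summable_target {r : ℝ} (hr0 : 0 ≤ r) (hr1 : r ≤ 1) :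
    Summable (fun n : ℕ => π / (4 * ((n:ℝ) + 1) ^ 2) * r ^ (2 * n + 2)) := by
  have hbase : Summable (fun n : ℕ => 1 / ((n:ℝ) + 1) ^ 2) := by
    have h := (summable_nat_add_iff (f := fun n : ℕ => 1 / (n:ℝ) ^ 2) 1).mpr
      (summable_one_div_nat_pow.mpr one_lt_two)
    apply h.congr
    intro n
    push_cast
    ring_nf
  apply Summable.of_nonneg_of_le _ _ (hbase.mul_left (π / 4))
  · intro n; positivity
  · intro n
    have h1 : r ^ (2 * n + 2) ≤ 1 := pow_le_one₀ hr0 hr1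
    have h2 : (0:ℝ) < ((n:ℝ) + 1) ^ 2 := by positivity
    calc π / (4 * ((n:ℝ)+1)^2) * r ^ (2*n+2) ≤ π / (4 * ((n:ℝ)+1)^2) * 1 := by
          apply mul_le_mul_of_nonneg_left h1 (by positivity)
      _ = π / 4 * (1 / ((n:ℝ)+1)^2) := by field_simp

theorem integral_arcsin_sq_eq_dilog (r : ℝ) (hr0 : 0 ≤ r) (hr1 : r ≤ 1) :
    ∫ t in (0 : ℝ)..1, (Real.arcsin (r * t)) ^ 2 / Real.sqrt (1 - t ^ 2) =
      π / 4 * dilog (r ^ 2) := by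
  set f : ℕ → ℝ → ℝ := fun n t => dd n / ((n:ℝ) + 1) * (r * t) ^ (2 * n + 2) / Real.sqrt (1 - t ^ 2)
    with hf
  have hrt : ∀ t ∈ Set.Ioo (0:ℝ) 1, 0 ≤ r * t ∧ r * t < 1 := by
    intro t ht
    constructor
    · exact mul_nonneg hr0 ht.1.le
    · calc r * t ≤ 1 * t := mul_le_mul_of_nonneg_right hr1 ht.1.le
        _ = t := one_mul t
        _ < 1 := ht.2
  -- step 1: convert to set integral on Ioo
  rw [intervalIntegral.integral_of_le zero_le_one, MeasureTheory.integral_Ioc_eq_integral_Ioo]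
  -- step 2: pointwise series expansion
  rw [MeasureTheory.setIntegral_congr_fun measurableSet_Ioo
    (g := fun t => ∑' n : ℕ, f n t) ?_]
  swap
  · intro t ht
    obtain ⟨h0, h1⟩ := hrt t ht
    show Real.arcsin (r*t) ^ 2 / Real.sqrt (1 - t^2) = ∑' n : ℕ, f n t
    rw [arcsin_sq_eq_SS h0 h1, SS, ← tsum_div_const]
  -- step 3: swap integral and sum
  have hmeas : ∀ n : ℕ, AEStronglyMeasurable (f n) (volume.restrict (Set.Ioo (0:ℝ) 1)) := by
    intro n
    apply Measurable.aestronglyMeasurable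
    apply Measurable.div
    · exact (measurable_id.const_mul r).pow_const _ |>.const_mul _
    · exact (measurable_const.sub (measurable_id.pow_const 2)).sqrt
  have hint : ∀ n : ℕ, IntegrableOn (f n) (Set.Ioo (0:ℝ) 1) volume := by
    intro n
    have h1 : IntegrableOn (fun t : ℝ => t ^ (2*n+2) / Real.sqrt (1 - t ^ 2))
        (Set.Ioo (0:ℝ) 1) volume :=
      ((intervalIntegrable_iff_integrableOn_Ioc_of_le zero_le_one).mp (II (2*n+2))).mono_set
        Set.Ioo_subset_Ioc_self
    have h2 : f n = fun t => (dd n / ((n:ℝ)+1) * r ^ (2*n+2)) *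
        (t ^ (2*n+2) / Real.sqrt (1 - t ^ 2)) := by
      funext t; rw [hf]; simp only [mul_pow]; ring
    rw [h2]
    exact h1.const_mul _
  have hval : ∀ n : ℕ, ∫ t in Set.Ioo (0:ℝ) 1, f n t =
      π / (4 * ((n:ℝ) + 1) ^ 2) * r ^ (2 * n + 2) := by
    intro n
    have h2 : f n = fun t => (dd n / ((n:ℝ)+1) * r ^ (2*n+2)) *
        (t ^ (2*n+2) / Real.sqrt (1 - t ^ 2)) := by
      funext t; rw [hf]; simp only [mul_pow]; ring
    rw [h2, MeasureTheory.integral_const_mul, ← MeasureTheory.integral_Ioc_eq_integral_Ioo,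
      ← intervalIntegral.integral_of_le zero_le_one]
    have : (∫ t in (0:ℝ)..1, t ^ (2*n+2) / Real.sqrt (1 - t ^ 2)) = II0 (2*n+2) := rfl
    rw [this]
    rw [mul_comm (dd n / ((n:ℝ)+1)) (r ^ (2*n+2)), mul_assoc, term_value n]
    ring
  have hnonneg : ∀ n : ℕ, ∀ t ∈ Set.Ioo (0:ℝ) 1, 0 ≤ f n t := by
    intro n t ht
    show (0:ℝ) ≤ dd n / ((n:ℝ)+1) * (r*t) ^ (2*n+2) / Real.sqrt (1 - t^2)
    apply div_nonneg _ (Real.sqrt_nonneg _)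
    exact mul_nonneg (div_nonneg (dd_pos n).le (by positivity)) (pow_nonneg (mul_nonneg hr0 ht.1.le) _)
  have hlint : ∀ n : ℕ, ∫⁻ t in Set.Ioo (0:ℝ) 1, ‖f n t‖₊ =
      ENNReal.ofReal (π / (4 * ((n:ℝ) + 1) ^ 2) * r ^ (2 * n + 2)) := by
    intro n
    have hnn : 0 ≤ᵐ[volume.restrict (Set.Ioo (0:ℝ) 1)] f n :=
      (MeasureTheory.ae_restrict_mem measurableSet_Ioo).mono (hnonneg n)
    rw [← hval n, MeasureTheory.ofReal_integral_eq_lintegral_ofReal (hint n) hnn]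
    apply MeasureTheory.lintegral_congr_ae
    filter_upwards [MeasureTheory.ae_restrict_mem measurableSet_Ioo] with t ht
    exact Real.enorm_eq_ofReal (hnonneg n t ht)
  have hsum := summable_target hr0 hr1
  have hne : (∑' n : ℕ, ∫⁻ t in Set.Ioo (0:ℝ) 1, ‖f n t‖₊) ≠ ⊤ := by
    have heq : (∑' n : ℕ, ∫⁻ t in Set.Ioo (0:ℝ) 1, ‖f n t‖₊) =
        ENNReal.ofReal (∑' n : ℕ, π / (4 * ((n:ℝ) + 1) ^ 2) * r ^ (2 * n + 2)) := by
      rw [ENNReal.ofReal_tsum_of_nonneg (fun n => by positivity) hsum]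
      exact tsum_congr hlint
    rw [heq]
    exact ENNReal.ofReal_ne_top
  have hswap := MeasureTheory.integral_tsum hmeas hne
  rw [hswap]
  have hfinal : (∑' n : ℕ, ∫ t in Set.Ioo (0:ℝ) 1, f n t) =
      ∑' n : ℕ, π / (4 * ((n:ℝ) + 1) ^ 2) * r ^ (2 * n + 2) := tsum_congr hval
  rw [hfinal, dilog, ← tsum_mul_left]
  apply tsum_congr
  intro k
  have e : 2 * k + 2 = 2 * (k + 1) := by ring
  rw [e, pow_mul]
  have hc : ((k:ℝ)+1)^2 ≠ 0 := by positivity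
  field_simp
end

section
/- For every r > 1, the function G(r) := (16/π³)·∫₀¹ arccos(t/r)·arcsin(t)/√(1−t²) dt is differentiable at r with derivative G'(r) = (16/(r²·π³))·∫₀¹ t·arcsin(t)/(√(1−t²)·√(1−t²/r²)) dt. -/
open Real intervalIntegral MeasureTheory

lemma meas_aux : Measurable fun t : ℝ => Real.sqrt (1 - t ^ 2) :=
  (continuous_const.sub (continuous_pow 2)).sqrt.measurable

lemma key_integrable : IntervalIntegrable (fun t : ℝ => 1 / Real.sqrt (1 - t ^ 2))
    MeasureTheory.volume 0 1 := by
  have h1 : IntervalIntegrable (fun t : ℝ => (1 - t) ^ (-(1/2) : ℝ)) volume 0 1 := by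
    have := (intervalIntegrable_rpow' (a := 0) (b := 1)
      (show (-1 : ℝ) < -(1/2) by norm_num)).comp_sub_left 1
    simpa using this.symm
  refine h1.mono_fun' (measurable_const.div meas_aux).aestronglyMeasurable ?_
  rw [Filter.EventuallyLE, ae_restrict_iff' measurableSet_uIoc]
  refine Filter.Eventually.of_forall fun t ht => ?_
  rw [Set.uIoc_of_le zero_le_one] at ht
  have h1t : (0:ℝ) ≤ 1 - t := by linarith [ht.2]
  have hle : 1 - t ≤ 1 - t ^ 2 := by nlinarith [ht.1.le, ht.2]
  rw [Real.rpow_neg h1t, ← Real.sqrt_eq_rpow]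
  simp only [Real.norm_eq_abs]
  rw [abs_of_nonneg (by positivity)]
  rcases eq_or_lt_of_le ht.2 with h | h
  · subst h; norm_num
  · have hpos : 0 < Real.sqrt (1 - t) := Real.sqrt_pos.2 (by linarith)
    rw [inv_eq_one_div]
    exact one_div_le_one_div_of_le hpos (Real.sqrt_le_sqrt hle)

theorem hasDerivAt_karamata_cdf_outside (r : ℝ) (hr : 1 < r) :
    HasDerivAt (fun x : ℝ => 16 / π ^ 3 *
        ∫ t in (0 : ℝ)..1, Real.arccos (t / x) * Real.arcsin t / Real.sqrt (1 - t ^ 2))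
      (16 / (r ^ 2 * π ^ 3) *
        ∫ t in (0 : ℝ)..1,
          t * Real.arcsin t / (Real.sqrt (1 - t ^ 2) * Real.sqrt (1 - t ^ 2 / r ^ 2))) r := by
  set s : ℝ := (r + 1) / 2 with hs
  have hs1 : 1 < s := by rw [hs]; linarith
  set δ : ℝ := 1 - 1 / s ^ 2 with hδ
  have hδ0 : 0 < δ := by
    rw [hδ]
    have : 1 / s ^ 2 < 1 := by
      rw [div_lt_one (by positivity)]
      nlinarith
    linarith
  set F' : ℝ → ℝ → ℝ := fun x t =>
    t / (x ^ 2 * Real.sqrt (1 - (t / x) ^ 2)) * Real.arcsin t / Real.sqrt (1 - t ^ 2) with hF'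
  have habs : ∀ t : ℝ, |Real.arcsin t| ≤ π / 2 := fun t =>
    abs_le.2 ⟨Real.neg_pi_div_two_le_arcsin t, Real.arcsin_le_pi_div_two t⟩
  have key := intervalIntegral.hasDerivAt_integral_of_dominated_loc_of_deriv_le
    (F := fun x t => Real.arccos (t / x) * Real.arcsin t / Real.sqrt (1 - t ^ 2))
    (F' := F') (x₀ := r) (a := 0) (b := 1) (μ := volume)
    (bound := fun t => (1 / Real.sqrt δ * (π / 2)) * (1 / Real.sqrt (1 - t ^ 2)))
    (s := Metric.ball r ((r - 1) / 2)) (Metric.ball_mem_nhds _ (by linarith))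
    ?_ ?_ ?_ ?_ ?_ ?_
  · -- conclude
    have hd := key.2.const_mul (16 / π ^ 3)
    refine hd.congr_deriv ?_
    have hint : (∫ t in (0:ℝ)..1, F' r t) =
        ∫ t in (0:ℝ)..1, (r ^ 2)⁻¹ *
          (t * Real.arcsin t / (Real.sqrt (1 - t ^ 2) * Real.sqrt (1 - t ^ 2 / r ^ 2))) := by
      refine intervalIntegral.integral_congr fun t _ => ?_
      simp only [hF', div_pow]
      ring
    rw [hint, intervalIntegral.integral_const_mul]
    ring
  · -- hF_meas
    refine Filter.Eventually.of_forall fun x => ?_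
    exact ((Real.continuous_arccos.comp (continuous_id.div_const x)).mul
      Real.continuous_arcsin).measurable.div meas_aux |>.aestronglyMeasurable
  · -- hF_int
    refine (key_integrable.const_mul (π * (π / 2))).mono_fun'
      (((Real.continuous_arccos.comp (continuous_id.div_const r)).mul
        Real.continuous_arcsin).measurable.div meas_aux).aestronglyMeasurable ?_
    rw [Filter.EventuallyLE, ae_restrict_iff' measurableSet_uIoc]
    refine Filter.Eventually.of_forall fun t ht => ?_
    simp only [Real.norm_eq_abs]
    rw [abs_div, abs_mul, abs_of_nonneg (Real.sqrt_nonneg _), div_eq_mul_inv,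
      mul_one_div, div_eq_mul_inv]
    refine mul_le_mul_of_nonneg_right ?_ (by positivity)
    exact mul_le_mul (by rw [abs_of_nonneg (Real.arccos_nonneg _)]; exact Real.arccos_le_pi _)
      (habs t) (abs_nonneg _) Real.pi_pos.le
  · -- hF'_meas
    apply Measurable.aestronglyMeasurable
    refine Measurable.div ?_ meas_aux
    refine Measurable.mul ?_ Real.continuous_arcsin.measurable
    exact measurable_id.div ((measurable_const.mul
      ((continuous_const.sub ((continuous_id.div_const r).pow 2)).sqrt.measurable)))
  · -- h_bound
    refine Filter.Eventually.of_forall fun t ht x hxball => ?_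
    rw [Set.uIoc_of_le zero_le_one] at ht
    have hxs : s < x := by
      have := abs_lt.1 (by simpa [Real.dist_eq] using hxball)
      rw [hs]; linarith [this.1]
    have hx1 : 1 < x := lt_trans hs1 hxs
    have hu : δ ≤ 1 - (t / x) ^ 2 := by
      have h2 : t ^ 2 / x ^ 2 ≤ 1 / s ^ 2 :=
        div_le_div₀ zero_le_one (by nlinarith [ht.1.le, ht.2]) (by positivity)
          (by nlinarith)
      have h3 : (t / x) ^ 2 = t ^ 2 / x ^ 2 := div_pow t x 2
      rw [hδ, h3]
      linarith
    have hsu : Real.sqrt δ ≤ x ^ 2 * Real.sqrt (1 - (t / x) ^ 2) := by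
      calc Real.sqrt δ ≤ Real.sqrt (1 - (t / x) ^ 2) := Real.sqrt_le_sqrt hu
        _ ≤ x ^ 2 * Real.sqrt (1 - (t / x) ^ 2) :=
          le_mul_of_one_le_left (Real.sqrt_nonneg _) (by nlinarith)
    have h1 : t / (x ^ 2 * Real.sqrt (1 - (t / x) ^ 2)) ≤ 1 / Real.sqrt δ :=
      div_le_div₀ zero_le_one ht.2 (Real.sqrt_pos.2 hδ0) hsu
    have h1' : |t / (x ^ 2 * Real.sqrt (1 - (t / x) ^ 2))| ≤ 1 / Real.sqrt δ := by
      rwa [abs_of_nonneg (div_nonneg ht.1.le (by positivity))]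
    simp only [hF', Real.norm_eq_abs]
    rw [abs_div, abs_of_nonneg (Real.sqrt_nonneg _)]
    calc |t / (x ^ 2 * Real.sqrt (1 - (t / x) ^ 2)) * Real.arcsin t| / Real.sqrt (1 - t ^ 2)
        = (|t / (x ^ 2 * Real.sqrt (1 - (t / x) ^ 2))| * |Real.arcsin t|) *
            (Real.sqrt (1 - t ^ 2))⁻¹ := by rw [abs_mul, div_eq_mul_inv]
      _ ≤ (1 / Real.sqrt δ * (π / 2)) * (Real.sqrt (1 - t ^ 2))⁻¹ :=
          mul_le_mul_of_nonneg_right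
            (mul_le_mul h1' (habs t) (abs_nonneg _) (by positivity)) (by positivity)
      _ = 1 / Real.sqrt δ * (π / 2) * (1 / Real.sqrt (1 - t ^ 2)) := by ring
  · -- bound_integrable
    exact key_integrable.const_mul _
  · -- h_diff
    refine Filter.Eventually.of_forall fun t ht x hxball => ?_
    rw [Set.uIoc_of_le zero_le_one] at ht
    have hxs : s < x := by
      have := abs_lt.1 (by simpa [Real.dist_eq] using hxball)
      rw [hs]; linarith [this.1]
    have hx1 : 1 < x := lt_trans hs1 hxs
    have hx0 : x ≠ 0 := by linarith
    have hd1 : HasDerivAt (fun y : ℝ => t / y) ((0 * x - t * 1) / x ^ 2) x :=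
      (hasDerivAt_const x t).div (hasDerivAt_id x) hx0
    have hne1 : t / x ≠ -1 := by
      have : 0 < t / x := div_pos ht.1 (by linarith)
      linarith
    have hne2 : t / x ≠ 1 := by
      have : t / x < 1 := (div_lt_one (by linarith)).2 (lt_of_le_of_lt ht.2 hx1)
      linarith
    have hd2a := (Real.hasDerivAt_arccos hne1 hne2).comp x hd1
    have hd2 : HasDerivAt (fun y : ℝ => Real.arccos (t / y))
        (-(1 / Real.sqrt (1 - (t / x) ^ 2)) * ((0 * x - t * 1) / x ^ 2)) x := hd2a
    have hd3 := (hd2.mul_const (Real.arcsin t)).div_const (Real.sqrt (1 - t ^ 2))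
    refine hd3.congr_deriv ?_
    simp only [hF']
    ring
end
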